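/- Let u(t,x) = ∫_ℝ φ(y) p(t,x,y) dy where p is the 1-dimensional skew Brownian motion density with parameters σ > 0, q ∈ [-1,1], and φ is bounded continuous. Then u satisfies the flux condition at the origin: for each t > 0, (1+q)/2 · ∂u/∂x(t, 0+) = (1-q)/2 · ∂u/∂x(t, 0-), where ∂u/∂x(t,0±) denote the one-sided limits lim_{ε↓0} ∂u/∂x(t, ±ε). -/

import Mathlib

open Real MeasureTheory Filter Set Topology

noncomputable def sgn (y : ℝ) : ℝ := if 0 < y then 1 else if y < 0 then -1 else 0

/-- Transition density of one-dimensional skew Brownian motion. -/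
noncomputable def skewDensity (σ q t x y : ℝ) : ℝ :=
  (Real.sqrt (2 * Real.pi * t * σ ^ 2))⁻¹ *
    (Real.exp (-(y - x) ^ 2 / (2 * t * σ ^ 2)) +
      q * sgn y * Real.exp (-(|y| + |x|) ^ 2 / (2 * t * σ ^ 2)))

/-! On either open half line, `|x| = s * x` with `s = ±1`, so there the skew density is a sum of
two Gaussian kernels `exp (-(w y - x) ^ 2 / c)` in `x`, with `w y = y` and the reflected centre
`w y = -s * |y|`. Since `|w y| = |y|`, these kernels and their `x`-derivatives are dominated,
locally uniformly in `x`, by `(|y| + R) * exp (-y ^ 2 / (2 * c))`, so `u` can be differentiated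
under the integral and the derivative extends continuously to `x = 0`. There `sgn y * |y| = y`
makes the reflected term equal to `-q * s` times the direct one, so `∂ₓu(t, 0±) = (1 ∓ q) * D`
for one number `D`, and the flux condition becomes `(1 + q) (1 - q) D = (1 - q) (1 + q) D`. -/

lemma tendsto_deriv_nhdsWithin_of_eqOn {f g g' : ℝ → ℝ} {s : Set ℝ} {a : ℝ} (hs : IsOpen s)
    (hfg : EqOn f g s) (hg : ∀ x ∈ s, HasDerivAt g (g' x) x) (hg' : ContinuousWithinAt g' s a) :
    Tendsto (deriv f) (𝓝[s] a) (𝓝 (g' a)) :=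
  hg'.congr' <| eventually_nhdsWithin_of_forall fun x hx =>
    ((hg x hx).congr_of_eventuallyEq (eventuallyEq_of_mem (hs.mem_nhds hx) hfg)).deriv.symm

noncomputable def gaussTransform (c : ℝ) (ψ w : ℝ → ℝ) (x : ℝ) : ℝ :=
  ∫ y, ψ y * exp (-(w y - x) ^ 2 / c)

noncomputable def gaussTransformDeriv (c : ℝ) (ψ w : ℝ → ℝ) (x : ℝ) : ℝ :=
  ∫ y, ψ y * (2 * (w y - x) / c * exp (-(w y - x) ^ 2 / c))

section GaussTransform

variable {c M R x : ℝ} {ψ w : ℝ → ℝ}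

lemma hasDerivAt_exp_neg_sq_sub_div (c z x : ℝ) :
    HasDerivAt (fun x => exp (-(z - x) ^ 2 / c)) (2 * (z - x) / c * exp (-(z - x) ^ 2 / c)) x := by
  have h := ((((hasDerivAt_id x).const_sub z).fun_pow 2).fun_neg.div_const c).exp
  simp only [id_eq] at h
  convert h using 1
  ring

lemma exp_neg_sq_sub_div_le (hc : 0 < c) (hx : |x| ≤ R) (z : ℝ) :
    exp (-(z - x) ^ 2 / c) ≤ exp (R ^ 2 / c) * exp (-(2 * c)⁻¹ * z ^ 2) := by
  rw [← exp_add, exp_le_exp]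
  have hxR : x ^ 2 ≤ R ^ 2 := sq_le_sq' (abs_le.mp hx).1 (abs_le.mp hx).2
  have key : -(z - x) ^ 2 ≤ R ^ 2 - z ^ 2 / 2 := by nlinarith [sq_nonneg (z - 2 * x)]
  calc -(z - x) ^ 2 / c ≤ (R ^ 2 - z ^ 2 / 2) / c := by gcongr
    _ = R ^ 2 / c + -(2 * c)⁻¹ * z ^ 2 := by field_simp; ring

lemma abs_deriv_exp_neg_sq_sub_div_le (hc : 0 < c) (hx : |x| ≤ R) (z : ℝ) :
    |2 * (z - x) / c * exp (-(z - x) ^ 2 / c)|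
      ≤ 2 / c * exp (R ^ 2 / c) * ((|z| + R) * exp (-(2 * c)⁻¹ * z ^ 2)) := by
  have hzx : |z - x| ≤ |z| + R := (abs_sub _ _).trans (by gcongr)
  have hR : 0 ≤ R := (abs_nonneg x).trans hx
  rw [abs_mul, abs_of_pos (exp_pos _), abs_div, abs_mul, abs_two, abs_of_pos hc]
  calc 2 * |z - x| / c * exp (-(z - x) ^ 2 / c)
      ≤ 2 * (|z| + R) / c * (exp (R ^ 2 / c) * exp (-(2 * c)⁻¹ * z ^ 2)) :=
        mul_le_mul (by gcongr) (exp_neg_sq_sub_div_le hc hx z) (exp_pos _).le (by positivity)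
    _ = _ := by ring

lemma integrable_abs_add_mul_exp_neg_mul_sq {b : ℝ} (hb : 0 < b) (R : ℝ) :
    Integrable fun y : ℝ => (|y| + R) * exp (-b * y ^ 2) := by
  have habs : Integrable fun y : ℝ => |y| * exp (-b * y ^ 2) := by
    refine (integrable_mul_exp_neg_mul_sq hb).norm.congr (.of_forall fun y => ?_)
    simp [abs_of_pos (exp_pos _)]
  refine (habs.add ((integrable_exp_neg_mul_sq hb).const_mul R)).congr (.of_forall fun y => ?_)
  simp only [Pi.add_apply]
  ring

lemma integrable_mul_exp_neg_sq_sub_div (hc : 0 < c) (hψ : AEStronglyMeasurable ψ)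
    (hψM : ∀ y, |ψ y| ≤ M) (hw : Measurable w) (hw_abs : ∀ y, |w y| = |y|) (x : ℝ) :
    Integrable fun y => ψ y * exp (-(w y - x) ^ 2 / c) := by
  refine Integrable.mono' ((integrable_exp_neg_mul_sq (b := (2 * c)⁻¹) (by positivity)).const_mul
    (M * exp (|x| ^ 2 / c))) (hψ.mul (by fun_prop)) (.of_forall fun y => ?_)
  have hwy : w y ^ 2 = y ^ 2 := by rw [← sq_abs, hw_abs, sq_abs]
  rw [norm_mul, norm_of_nonneg (exp_pos _).le, mul_assoc, ← hwy]
  exact mul_le_mul (hψM y) (exp_neg_sq_sub_div_le hc le_rfl _) (exp_pos _).le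
    ((abs_nonneg _).trans (hψM y))

lemma norm_mul_deriv_exp_neg_sq_sub_div_le (hc : 0 < c) (hψM : ∀ y, |ψ y| ≤ M)
    (hw_abs : ∀ y, |w y| = |y|) (hx : |x| ≤ R) (y : ℝ) :
    ‖ψ y * (2 * (w y - x) / c * exp (-(w y - x) ^ 2 / c))‖
      ≤ M * (2 / c * exp (R ^ 2 / c)) * ((|y| + R) * exp (-(2 * c)⁻¹ * y ^ 2)) := by
  have hwy : w y ^ 2 = y ^ 2 := by rw [← sq_abs, hw_abs, sq_abs]
  rw [norm_mul, Real.norm_eq_abs, Real.norm_eq_abs, mul_assoc, ← hwy, ← hw_abs y]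
  exact mul_le_mul (hψM y) (abs_deriv_exp_neg_sq_sub_div_le hc hx _) (abs_nonneg _)
    ((abs_nonneg _).trans (hψM y))

lemma hasDerivAt_gaussTransform (hc : 0 < c) (hψ : AEStronglyMeasurable ψ)
    (hψM : ∀ y, |ψ y| ≤ M) (hw : Measurable w) (hw_abs : ∀ y, |w y| = |y|) (x₀ : ℝ) :
    HasDerivAt (gaussTransform c ψ w) (gaussTransformDeriv c ψ w x₀) x₀ := by
  refine (hasDerivAt_integral_of_dominated_loc_of_deriv_le (Metric.ball_mem_nhds x₀ one_pos)
    (.of_forall fun x => hψ.mul (by fun_prop))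
    (integrable_mul_exp_neg_sq_sub_div hc hψ hψM hw hw_abs x₀) (hψ.mul (by fun_prop))
    (.of_forall fun y x hx =>
      norm_mul_deriv_exp_neg_sq_sub_div_le hc hψM hw_abs (norm_lt_of_mem_ball hx).le y)
    ((integrable_abs_add_mul_exp_neg_mul_sq (by positivity) _).const_mul _)
    (.of_forall fun y x _ => (hasDerivAt_exp_neg_sq_sub_div c (w y) x).const_mul (ψ y))).2

lemma continuous_gaussTransformDeriv (hc : 0 < c) (hψ : AEStronglyMeasurable ψ)
    (hψM : ∀ y, |ψ y| ≤ M) (hw : Measurable w) (hw_abs : ∀ y, |w y| = |y|) :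
    Continuous (gaussTransformDeriv c ψ w) := by
  refine continuous_iff_continuousAt.mpr fun x₀ => continuousAt_of_dominated
    (.of_forall fun x => hψ.mul (by fun_prop)) ?_
    ((integrable_abs_add_mul_exp_neg_mul_sq (b := (2 * c)⁻¹) (by positivity) (|x₀| + 1)).const_mul
      (M * (2 / c * exp ((|x₀| + 1) ^ 2 / c))))
    (.of_forall fun y => by fun_prop)
  filter_upwards [Metric.ball_mem_nhds x₀ one_pos] with x hx
  exact .of_forall <|
    norm_mul_deriv_exp_neg_sq_sub_div_le hc hψM hw_abs (norm_lt_of_mem_ball hx).le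

end GaussTransform

lemma abs_sgn_le_one (y : ℝ) : |sgn y| ≤ 1 := by
  unfold sgn; split_ifs <;> norm_num

lemma sgn_mul_abs (y : ℝ) : sgn y * |y| = y := by
  unfold sgn
  rcases lt_trichotomy 0 y with h | rfl | h
  · simp [h, abs_of_pos h]
  · simp
  · simp [h, h.not_gt, abs_of_neg h]

lemma abs_mul_sgn_le {φ : ℝ → ℝ} {M : ℝ} (hφM : ∀ y, |φ y| ≤ M) (y : ℝ) :
    |φ y * sgn y| ≤ M := by
  rw [abs_mul]
  exact (mul_le_of_le_one_right (abs_nonneg _) (abs_sgn_le_one y)).trans (hφM y)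

lemma measurable_sgn : Measurable sgn :=
  measurable_const.ite measurableSet_Ioi (measurable_const.ite measurableSet_Iio measurable_const)

section SkewDensity

variable {σ q t s x : ℝ}

lemma skewDensity_eq_of_nonneg_mul (hs : |s| = 1) (hx : 0 ≤ s * x) (y : ℝ) :
    skewDensity σ q t x y = (√(2 * π * t * σ ^ 2))⁻¹ * (exp (-(y - x) ^ 2 / (2 * t * σ ^ 2)) +
      q * sgn y * exp (-(-s * |y| - x) ^ 2 / (2 * t * σ ^ 2))) := by
  have hs2 : s ^ 2 = 1 := by rw [← sq_abs, hs, one_pow]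
  have hxs : |x| = s * x := by rw [← abs_of_nonneg hx, abs_mul, hs, one_mul]
  have hsq : (|y| + |x|) ^ 2 = (-s * |y| - x) ^ 2 := by
    rw [hxs]; linear_combination (x ^ 2 - |y| ^ 2) * hs2
  rw [skewDensity, hsq]

lemma integral_mul_skewDensity_eq_of_nonneg_mul (hσ : 0 < σ) (ht : 0 < t) {φ : ℝ → ℝ} {M : ℝ}
    (hφ : AEStronglyMeasurable φ) (hφM : ∀ y, |φ y| ≤ M) (hs : |s| = 1) (hx : 0 ≤ s * x) :
    ∫ y, φ y * skewDensity σ q t x y = (√(2 * π * t * σ ^ 2))⁻¹ *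
      (gaussTransform (2 * t * σ ^ 2) φ id x +
        q * gaussTransform (2 * t * σ ^ 2) (φ * sgn) (fun y => -s * |y|) x) := by
  have hc : 0 < 2 * t * σ ^ 2 := by positivity
  have h₁ := integrable_mul_exp_neg_sq_sub_div (w := id) hc hφ hφM measurable_id
    (fun _ => rfl) x
  have h₂ := integrable_mul_exp_neg_sq_sub_div (ψ := φ * sgn)
    (w := fun y => -s * |y|) hc (hφ.mul measurable_sgn.aestronglyMeasurable)
    (abs_mul_sgn_le hφM) (by fun_prop) (fun y => by simp [abs_mul, hs]) x
  rw [gaussTransform, gaussTransform, ← integral_const_mul, ← integral_add h₁ (h₂.const_mul q),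
    ← integral_const_mul]
  refine integral_congr_ae (.of_forall fun y => ?_)
  simp only [skewDensity_eq_of_nonneg_mul hs hx, Pi.mul_apply, id]
  ring

end SkewDensity

lemma gaussTransformDeriv_mul_sgn_zero {c s : ℝ} (hs : |s| = 1) (ψ : ℝ → ℝ) :
    gaussTransformDeriv c (ψ * sgn) (fun y => -s * |y|) 0 = -s * gaussTransformDeriv c ψ id 0 := by
  rw [gaussTransformDeriv, gaussTransformDeriv, ← integral_const_mul]
  refine integral_congr_ae (.of_forall fun y => ?_)
  have hsq : (-s * |y| - 0) ^ 2 = (y - 0) ^ 2 := by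
    rw [sub_zero, sub_zero, mul_pow, neg_sq, ← sq_abs s, hs, one_pow, one_mul, sq_abs]
  simp only [Pi.mul_apply, id, hsq]
  linear_combination (-s * ψ y * (2 / c) * exp (-(y - 0) ^ 2 / c)) * sgn_mul_abs y

theorem tendsto_deriv_integral_mul_skewDensity {σ q t s M : ℝ} (hσ : 0 < σ) (ht : 0 < t)
    {φ : ℝ → ℝ} (hφ : AEStronglyMeasurable φ) (hφM : ∀ y, |φ y| ≤ M) (hs : |s| = 1) :
    Tendsto (deriv fun ξ => ∫ y, φ y * skewDensity σ q t ξ y) (𝓝[{x | 0 < s * x}] 0)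
      (𝓝 ((1 - q * s) * ((√(2 * π * t * σ ^ 2))⁻¹ *
        gaussTransformDeriv (2 * t * σ ^ 2) φ id 0))) := by
  have hc : 0 < 2 * t * σ ^ 2 := by positivity
  have hψ := hφ.mul measurable_sgn.aestronglyMeasurable
  have hw : ∀ y : ℝ, |(-s * |y|)| = |y| := fun y => by simp [abs_mul, hs]
  have hderiv₁ := hasDerivAt_gaussTransform hc hφ hφM measurable_id (fun _ => rfl)
  have hderiv₂ := hasDerivAt_gaussTransform hc hψ (abs_mul_sgn_le hφM) (by fun_prop) hw
  have hcont₁ := continuous_gaussTransformDeriv hc hφ hφM measurable_id (fun _ => rfl)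
  have hcont₂ := continuous_gaussTransformDeriv hc hψ (abs_mul_sgn_le hφM) (by fun_prop) hw
  have hopen : IsOpen {x : ℝ | 0 < s * x} := isOpen_lt continuous_const (by fun_prop)
  convert tendsto_deriv_nhdsWithin_of_eqOn hopen
    (fun x hx => integral_mul_skewDensity_eq_of_nonneg_mul hσ ht hφ hφM hs (le_of_lt hx))
    (fun x _ => ((hderiv₁ x).add ((hderiv₂ x).const_mul q)).const_mul _)
    (hcont₁.add (hcont₂.const_mul q) |>.const_mul _).continuousWithinAt using 2
  rw [gaussTransformDeriv_mul_sgn_zero hs]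
  ring

theorem flux_condition_general (σ q : ℝ) (hσ : 0 < σ)
    (φ : ℝ → ℝ) (hφc : Continuous φ) (hφb : ∃ M : ℝ, ∀ y, |φ y| ≤ M) (t : ℝ) (ht : 0 < t) :
    ∃ Dp Dm : ℝ,
      Tendsto (fun x : ℝ => deriv (fun ξ : ℝ => ∫ y : ℝ, φ y * skewDensity σ q t ξ y) x)
        (nhdsWithin 0 (Set.Ioi 0)) (nhds Dp) ∧
      Tendsto (fun x : ℝ => deriv (fun ξ : ℝ => ∫ y : ℝ, φ y * skewDensity σ q t ξ y) x)
        (nhdsWithin 0 (Set.Iio 0)) (nhds Dm) ∧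
      (1 + q) / 2 * Dp = (1 - q) / 2 * Dm := by
  obtain ⟨M, hM⟩ := hφb
  have right := tendsto_deriv_integral_mul_skewDensity (q := q) (s := 1) hσ ht
    hφc.aestronglyMeasurable hM abs_one
  have left := tendsto_deriv_integral_mul_skewDensity (q := q) (s := -1) hσ ht
    hφc.aestronglyMeasurable hM (by simp)
  simp only [one_mul, neg_one_mul, neg_pos] at right left
  exact ⟨_, _, right, left, by ring⟩

theorem flux_condition (σ q : ℝ) (hσ : 0 < σ) (hq : q ∈ Set.Icc (-1 : ℝ) 1)
    (φ : ℝ → ℝ) (hφc : Continuous φ) (hφb : ∃ M : ℝ, ∀ y, |φ y| ≤ M) (t : ℝ) (ht : 0 < t) :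
    ∃ Dp Dm : ℝ,
      Tendsto (fun x : ℝ => deriv (fun ξ : ℝ => ∫ y : ℝ, φ y * skewDensity σ q t ξ y) x)
        (nhdsWithin 0 (Set.Ioi 0)) (nhds Dp) ∧
      Tendsto (fun x : ℝ => deriv (fun ξ : ℝ => ∫ y : ℝ, φ y * skewDensity σ q t ξ y) x)
        (nhdsWithin 0 (Set.Iio 0)) (nhds Dm) ∧
      (1 + q) / 2 * Dp = (1 - q) / 2 * Dm :=
  flux_condition_general σ q hσ φ hφc hφb t ht
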